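/- Let (Φ_k)_{k∈ℕ} be a sequence of finite sets of self-mappings on the set B of probability measures on X̄ = X ∪ {∂}, such that for all k and all b ∈ B, Σ_{φ ∈ Φ_k} |supp(φ(b)|_X)| ≤ |supp(b|_X)|. Then for any probability measure b₀ supported on X and any k ∈ ℕ, the set Φ_{0:k}(b₀) = {φ_k ∘ ⋯ ∘ φ₀(b₀) : φ_i ∈ Φ_i} satisfies |Φ_{0:k}(b₀) \ {δ_∂}| ≤ |supp(b₀)|. -/
import Mathlib


open scoped Classical

/-- The Dirac measure at the cemetery point `∂` (encoded by `none`). -/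
noncomputable def diracCemetery (X : Type*) : Option X → NNReal :=
  fun o => if o = none then 1 else 0

/-- Cardinality of the support of the restriction to `X` of a measure on `X̄`. -/
noncomputable def suppCard {X : Type*} [Fintype X] (b : Option X → NNReal) : ℕ :=
  (Finset.univ.filter (fun x : X => b (some x) ≠ 0)).card

/-- The set `Φ_{0:k}(b₀) = {φ_k ∘ ⋯ ∘ φ₀ (b₀) : φ_i ∈ Φ_i}` of all measures obtained
by applying one mapping from each `Φ_i`, in order, to `b₀`. -/
def iterSet {X : Type*}
    (Φ : ℕ → Finset ((Option X → NNReal) → (Option X → NNReal)))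
    (b₀ : Option X → NNReal) : ℕ → Set (Option X → NNReal)
  | 0 => {m | ∃ φ ∈ Φ 0, m = φ b₀}
  | k + 1 => {m | ∃ φ ∈ Φ (k + 1), ∃ m' ∈ iterSet Φ b₀ k, m = φ m'}

/-- Finset version of `iterSet`. -/
noncomputable def iterFinset {X : Type*} [Fintype X]
    (Φ : ℕ → Finset ((Option X → NNReal) → (Option X → NNReal)))
    (b₀ : Option X → NNReal) : ℕ → Finset (Option X → NNReal)
  | 0 => (Φ 0).image (fun φ => φ b₀)
  | k + 1 => ((Φ (k + 1)) ×ˢ iterFinset Φ b₀ k).image (fun p => p.1 p.2)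

lemma iterSet_eq_coe {X : Type*} [Fintype X]
    (Φ : ℕ → Finset ((Option X → NNReal) → (Option X → NNReal)))
    (b₀ : Option X → NNReal) (k : ℕ) :
    iterSet Φ b₀ k = ↑(iterFinset Φ b₀ k) := by
  induction k with
  | zero =>
      ext m
      simp [iterSet, iterFinset, eq_comm]
  | succ k ih =>
      ext m
      simp only [iterSet, iterFinset, Set.mem_setOf_eq, Finset.coe_image,
        Set.mem_image, Finset.mem_coe, Finset.mem_product, ih, Prod.exists]
      constructor
      · rintro ⟨φ, hφ, m', hm', rfl⟩
        exact ⟨φ, m', ⟨hφ, hm'⟩, rfl⟩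
      · rintro ⟨φ, m', ⟨hφ, hm'⟩, rfl⟩
        exact ⟨φ, hφ, m', hm', rfl⟩

lemma sum_image_le_nat {α β : Type*} [DecidableEq β] (s : Finset α) (f : α → β) (g : β → ℕ) :
    ∑ y ∈ s.image f, g y ≤ ∑ x ∈ s, g (f x) := by
  induction s using Finset.induction_on with
  | empty => simp
  | @insert a s ha ih =>
      rw [Finset.image_insert, Finset.sum_insert ha]
      calc ∑ y ∈ insert (f a) (s.image f), g y
          ≤ g (f a) + ∑ y ∈ s.image f, g y := by
            by_cases h : f a ∈ s.image f
            · rw [Finset.insert_eq_self.2 h]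
              exact Nat.le_add_left _ _
            · rw [Finset.sum_insert h]
        _ ≤ g (f a) + ∑ x ∈ s, g (f x) := Nat.add_le_add_left ih _

theorem card_iterSet_le_suppCard {X : Type*} [Fintype X]
    (Φ : ℕ → Finset ((Option X → NNReal) → (Option X → NNReal)))
    (hprob : ∀ k : ℕ, ∀ φ ∈ Φ k, ∀ b : Option X → NNReal,
      (∑ o : Option X, b o = 1) → (∑ o : Option X, φ b o = 1))
    (hcontract : ∀ k : ℕ, ∀ b : Option X → NNReal, (∑ o : Option X, b o = 1) →
      (∑ φ ∈ Φ k, suppCard (φ b)) ≤ suppCard b)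
    (b₀ : Option X → NNReal) (hb₀ : ∑ o : Option X, b₀ o = 1)
    (hb₀X : b₀ none = 0) (k : ℕ) :
    (iterSet Φ b₀ k \ {diracCemetery X}).ncard ≤ suppCard b₀ := by
  -- all elements of iterFinset are probability measures
  have hprobS : ∀ k : ℕ, ∀ m ∈ iterFinset Φ b₀ k, ∑ o : Option X, m o = 1 := by
    intro k
    induction k with
    | zero =>
        intro m hm
        obtain ⟨φ, hφ, rfl⟩ := Finset.mem_image.1 hm
        exact hprob 0 φ hφ b₀ hb₀
    | succ k ih =>
        intro m hm
        obtain ⟨⟨φ, m'⟩, hp, rfl⟩ := Finset.mem_image.1 hm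
        obtain ⟨hφ, hm'⟩ := Finset.mem_product.1 hp
        exact hprob (k + 1) φ hφ m' (ih m' hm')
  -- the key invariant
  have hsum : ∀ k : ℕ, ∑ m ∈ iterFinset Φ b₀ k, suppCard m ≤ suppCard b₀ := by
    intro k
    induction k with
    | zero =>
        calc ∑ m ∈ (Φ 0).image (fun φ => φ b₀), suppCard m
            ≤ ∑ φ ∈ Φ 0, suppCard (φ b₀) := sum_image_le_nat _ _ _
          _ ≤ suppCard b₀ := hcontract 0 b₀ hb₀
    | succ k ih =>
        calc ∑ m ∈ ((Φ (k + 1)) ×ˢ iterFinset Φ b₀ k).image (fun p => p.1 p.2), suppCard m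
            ≤ ∑ p ∈ (Φ (k + 1)) ×ˢ iterFinset Φ b₀ k, suppCard (p.1 p.2) :=
              sum_image_le_nat _ _ _
          _ = ∑ φ ∈ Φ (k + 1), ∑ m' ∈ iterFinset Φ b₀ k, suppCard (φ m') :=
              Finset.sum_product _ _ _
          _ = ∑ m' ∈ iterFinset Φ b₀ k, ∑ φ ∈ Φ (k + 1), suppCard (φ m') :=
              Finset.sum_comm
          _ ≤ ∑ m' ∈ iterFinset Φ b₀ k, suppCard m' :=
              Finset.sum_le_sum (fun m' hm' =>
                hcontract (k + 1) m' (hprobS k m' hm'))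
          _ ≤ suppCard b₀ := ih
  -- a probability measure with empty support on X is the cemetery Dirac
  have hdirac : ∀ m : Option X → NNReal, (∑ o : Option X, m o = 1) →
      suppCard m = 0 → m = diracCemetery X := by
    intro m hm h0
    have hx : ∀ x : X, m (some x) = 0 := by
      intro x
      by_contra hne
      have hxm : x ∈ Finset.univ.filter (fun x : X => m (some x) ≠ 0) := by
        simp [hne]
      have h0' : (Finset.univ.filter (fun x : X => m (some x) ≠ 0)) = ∅ :=
        Finset.card_eq_zero.1 h0
      simp [h0'] at hxm
    have hnone : m none = 1 := by
      rw [Fintype.sum_option] at hm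
      simpa [hx] using hm
    funext o
    cases o with
    | none => simp [diracCemetery, hnone]
    | some x => simp [diracCemetery, hx]
  -- finish
  rw [iterSet_eq_coe]
  have hsub : (↑(iterFinset Φ b₀ k) : Set _) \ {diracCemetery X} =
      ↑((iterFinset Φ b₀ k).filter (fun m => m ≠ diracCemetery X)) := by
    ext m; simp [Set.mem_diff]
  rw [hsub, Set.ncard_coe_finset]
  set T := (iterFinset Φ b₀ k).filter (fun m => m ≠ diracCemetery X) with hT
  calc T.card = ∑ _m ∈ T, 1 := by simp
    _ ≤ ∑ m ∈ T, suppCard m := by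
        refine Finset.sum_le_sum ?_
        intro m hm
        obtain ⟨hmem, hne⟩ := Finset.mem_filter.1 hm
        rcases Nat.eq_zero_or_pos (suppCard m) with h0 | h1
        · exact absurd (hdirac m (hprobS k m hmem) h0) hne
        · exact h1
    _ ≤ ∑ m ∈ iterFinset Φ b₀ k, suppCard m :=
        Finset.sum_le_sum_of_subset (Finset.filter_subset _ _)
    _ ≤ suppCard b₀ := hsum k
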